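/- For bounded operators X, Y on a complex Hilbert space H, the numerical radius of the 2×2 operator matrix [[X, Y],[Y, X]] on H ⊕ H equals max{w(X+Y), w(X−Y)}. -/

import Mathlib

open scoped InnerProductSpace
open ContinuousLinearMap
noncomputable section
set_option synthInstance.maxHeartbeats 1000000
set_option maxHeartbeats 1000000

variable {H : Type*} [NormedAddCommGroup H] [InnerProductSpace ℂ H] [CompleteSpace H]

/-- The numerical radius of a bounded operator. -/
noncomputable def numRadius (T : H →L[ℂ] H) : ℝ :=
  sSup {r : ℝ | ∃ x : H, ‖x‖ = 1 ∧ r = ‖(⟪T x, x⟫_ℂ)‖}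

/-- The 2×2 block operator [[X, Y],[Z, W]] on H ⊕ H (ℓ² direct sum). -/
noncomputable def blockOp (X Y Z W : H →L[ℂ] H) :
    WithLp 2 (H × H) →L[ℂ] WithLp 2 (H × H) :=
  ((WithLp.prodContinuousLinearEquiv 2 ℂ H H).symm.toContinuousLinearMap) ∘L
    ((X ∘L ContinuousLinearMap.fst ℂ H H + Y ∘L ContinuousLinearMap.snd ℂ H H).prod
      (Z ∘L ContinuousLinearMap.fst ℂ H H + W ∘L ContinuousLinearMap.snd ℂ H H)) ∘L
    ((WithLp.prodContinuousLinearEquiv 2 ℂ H H).toContinuousLinearMap)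

/-!
The unitary `U = (1/√2) [[I, I], [I, -I]]` of `H ⊕ H` is its own inverse and conjugates
`[[X, Y], [Y, X]]` to the diagonal operator `diag(X + Y, X - Y)`. The numerical radius only
depends on the values of the quadratic form `x ↦ ⟪T x, x⟫` on unit vectors, so it is invariant
under this conjugation, and the numerical radius of `diag(A, B)` is `max (w A) (w B)`: unit
vectors of `H ⊕ H` split as `(a, b)` with `‖a‖² + ‖b‖² = 1`, and `H` embeds isometrically into
either summand.
-/

section NumericalRadius

variable {E F : Type*} [NormedAddCommGroup E] [InnerProductSpace ℂ E]
  [NormedAddCommGroup F] [InnerProductSpace ℂ F]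

lemma numRadius_nonneg (T : E →L[ℂ] E) : 0 ≤ numRadius T :=
  Real.sSup_nonneg (by rintro r ⟨x, -, rfl⟩; positivity)

lemma norm_inner_le_numRadius (T : E →L[ℂ] E) {x : E} (hx : ‖x‖ = 1) :
    ‖⟪T x, x⟫_ℂ‖ ≤ numRadius T := by
  refine le_csSup ⟨‖T‖, ?_⟩ ⟨x, hx, rfl⟩
  rintro r ⟨y, hy, rfl⟩
  calc ‖⟪T y, y⟫_ℂ‖ ≤ ‖T y‖ * ‖y‖ := norm_inner_le_norm _ _
    _ ≤ ‖T‖ := by simpa [hy] using T.le_opNorm y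

lemma norm_inner_le_numRadius_mul_sq (T : E →L[ℂ] E) (x : E) :
    ‖⟪T x, x⟫_ℂ‖ ≤ numRadius T * ‖x‖ ^ 2 := by
  rcases eq_or_ne x 0 with rfl | hx
  · simp
  have hx' : 0 < ‖x‖ := norm_pos_iff.mpr hx
  have hunit : ‖((‖x‖⁻¹ : ℝ) : ℂ) • x‖ = 1 := by
    rw [norm_smul, Complex.norm_real, norm_inv, norm_norm, inv_mul_cancel₀ hx'.ne']
  have h := norm_inner_le_numRadius T hunit
  simp only [map_smul, inner_smul_left, inner_smul_right, norm_mul, Complex.norm_conj,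
    Complex.norm_real, norm_inv, norm_norm, ← mul_assoc, ← sq, inv_pow] at h
  rwa [inv_mul_le_iff₀ (by positivity), mul_comm] at h

lemma numRadius_le {T : E →L[ℂ] E} {M : ℝ} (hM : 0 ≤ M)
    (h : ∀ x : E, ‖x‖ = 1 → ‖⟪T x, x⟫_ℂ‖ ≤ M) : numRadius T ≤ M :=
  Real.sSup_le (by rintro r ⟨x, hx, rfl⟩; exact h x hx) hM

lemma numRadius_le_of_isometry_of_inner_eq {S : E →L[ℂ] E} {T : F →L[ℂ] F} (U : E → F)
    (hU : ∀ x, ‖U x‖ = ‖x‖) (h : ∀ x, ⟪T (U x), U x⟫_ℂ = ⟪S x, x⟫_ℂ) :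
    numRadius S ≤ numRadius T :=
  numRadius_le (numRadius_nonneg T) fun x hx => h x ▸ norm_inner_le_numRadius T ((hU x).trans hx)

end NumericalRadius

section BlockOperator

variable {E : Type*} [NormedAddCommGroup E] [InnerProductSpace ℂ E]

@[simp]
lemma blockOp_apply_fst (X Y Z W : E →L[ℂ] E) (p : WithLp 2 (E × E)) :
    (blockOp X Y Z W p).fst = X p.fst + Y p.snd :=
  rfl

@[simp]
lemma blockOp_apply_snd (X Y Z W : E →L[ℂ] E) (p : WithLp 2 (E × E)) :
    (blockOp X Y Z W p).snd = Z p.fst + W p.snd :=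
  rfl

lemma numRadius_blockOp_diagonal (A B : E →L[ℂ] E) :
    numRadius (blockOp A 0 0 B) = max (numRadius A) (numRadius B) := by
  refine le_antisymm ?_ (max_le ?_ ?_)
  · refine numRadius_le (le_max_of_le_left (numRadius_nonneg A)) fun p hp => ?_
    have hp' : ‖p.fst‖ ^ 2 + ‖p.snd‖ ^ 2 = 1 := by
      rw [← WithLp.prod_norm_sq_eq_of_L2, hp, one_pow]
    calc ‖⟪blockOp A 0 0 B p, p⟫_ℂ‖ = ‖⟪A p.fst, p.fst⟫_ℂ + ⟪B p.snd, p.snd⟫_ℂ‖ := by simp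
      _ ≤ numRadius A * ‖p.fst‖ ^ 2 + numRadius B * ‖p.snd‖ ^ 2 :=
        (norm_add_le _ _).trans <| add_le_add (norm_inner_le_numRadius_mul_sq A _)
          (norm_inner_le_numRadius_mul_sq B _)
      _ ≤ max (numRadius A) (numRadius B) * (‖p.fst‖ ^ 2 + ‖p.snd‖ ^ 2) := by
        rw [mul_add]; gcongr <;> simp
      _ = max (numRadius A) (numRadius B) := by rw [hp', mul_one]
  · exact numRadius_le_of_isometry_of_inner_eq (fun x => WithLp.toLp 2 (x, 0))
      (by simp) (by simp)
  · exact numRadius_le_of_isometry_of_inner_eq (fun x => WithLp.toLp 2 (0, x))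
      (by simp) (by simp)

def hadamard (p : WithLp 2 (E × E)) : WithLp 2 (E × E) :=
  WithLp.toLp 2 (((√2)⁻¹ : ℂ) • (p.fst + p.snd), ((√2)⁻¹ : ℂ) • (p.fst - p.snd))

lemma inv_sqrt_two_sq : ((√2)⁻¹ : ℂ) ^ 2 = 2⁻¹ := by
  rw [inv_pow, ← Complex.ofReal_pow, Real.sq_sqrt zero_le_two, Complex.ofReal_ofNat]

lemma hadamard_hadamard (p : WithLp 2 (E × E)) : hadamard (hadamard p) = p := by
  refine WithLp.ofLp_injective 2 (Prod.ext ?_ ?_) <;>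
    simp only [hadamard, WithLp.toLp_fst, WithLp.toLp_snd, WithLp.ofLp_fst, WithLp.ofLp_snd]
  · linear_combination (norm := module) (2 : ℂ) • inv_sqrt_two_sq • p.fst
  · linear_combination (norm := module) (2 : ℂ) • inv_sqrt_two_sq • p.snd

lemma norm_hadamard (p : WithLp 2 (E × E)) : ‖hadamard p‖ = ‖p‖ := by
  rw [← sq_eq_sq₀ (norm_nonneg _) (norm_nonneg _), WithLp.prod_norm_sq_eq_of_L2,
    WithLp.prod_norm_sq_eq_of_L2]
  simp only [hadamard, WithLp.toLp_fst, WithLp.toLp_snd, norm_smul, mul_pow, ← mul_add,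
    parallelogram_law_with_norm ℂ, norm_inv, Complex.norm_real, Real.norm_eq_abs, inv_pow, sq_abs]
  rw [Real.sq_sqrt zero_le_two, inv_mul_cancel_left₀ two_ne_zero]

lemma inner_blockOp_hadamard (X Y : E →L[ℂ] E) (p : WithLp 2 (E × E)) :
    ⟪blockOp X Y Y X (hadamard p), hadamard p⟫_ℂ = ⟪blockOp (X + Y) 0 0 (X - Y) p, p⟫_ℂ := by
  simp only [WithLp.prod_inner_apply, WithLp.ofLp_fst, WithLp.ofLp_snd, blockOp_apply_fst,
    blockOp_apply_snd, hadamard, WithLp.toLp_fst, WithLp.toLp_snd, map_smul, map_add, map_sub,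
    add_apply, sub_apply, zero_apply, add_zero, zero_add, inner_smul_left, inner_smul_right,
    inner_add_left, inner_add_right, inner_sub_left, inner_sub_right, map_inv₀, Complex.conj_ofReal]
  linear_combination (2 * (⟪X p.fst, p.fst⟫_ℂ + ⟪Y p.fst, p.fst⟫_ℂ + ⟪X p.snd, p.snd⟫_ℂ
    - ⟪Y p.snd, p.snd⟫_ℂ)) * inv_sqrt_two_sq

end BlockOperator

theorem numRadius_circulant (X Y : H →L[ℂ] H) :
    numRadius (blockOp X Y Y X) = max (numRadius (X + Y)) (numRadius (X - Y)) := by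
  have inner_diagonal_hadamard : ∀ p, ⟪blockOp (X + Y) 0 0 (X - Y) (hadamard p), hadamard p⟫_ℂ
      = ⟪blockOp X Y Y X p, p⟫_ℂ := fun p => by
    rw [← inner_blockOp_hadamard, hadamard_hadamard]
  rw [← numRadius_blockOp_diagonal]
  exact le_antisymm
    (numRadius_le_of_isometry_of_inner_eq hadamard norm_hadamard inner_diagonal_hadamard)
    (numRadius_le_of_isometry_of_inner_eq hadamard norm_hadamard (inner_blockOp_hadamard X Y))
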